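/- Let $X$ be a real-valued random variable on a probability space, $v \in \mathbb{R}^d$ fixed, and $\Gamma$ a random variable with values in $[\gamma_{\min}, \gamma_{\max}]$ for deterministic constants $0 \le \gamma_{\min} \le \gamma_{\max}$. Let $Y$ be an $\mathbb{R}^d$-valued random variable with $\mathbb{E}[Y] = 0$ and $\mathbb{E}[\|Y\|] < \infty$. Then $\mathbb{E}[\Gamma \cdot Y^T v] \le (\gamma_{\max} - \gamma_{\min}) \|v\| \cdot \mathbb{E}[\|Y\|]$. -/

import Mathlib

/-! Since `E[Yᵀv] = 0`, subtracting the constant `γmin` from `Γ` does not change `E[Γ · Yᵀv]`.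
The factor `Γ - γmin` lies in `[0, γmax - γmin]`, so `(Γ - γmin) · Yᵀv ≤ (γmax - γmin) |Yᵀv|`, and
Cauchy–Schwarz gives `|Yᵀv| ≤ ‖v‖ ‖Y‖`. -/

open MeasureTheory
open scoped RealInnerProductSpace

section

variable {Ω : Type*} [MeasurableSpace Ω] {μ : Measure Ω}

theorem integral_mul_le_of_integral_eq_zero {Γ f : Ω → ℝ} {a b : ℝ}
    (hΓ : AEStronglyMeasurable Γ μ) (hΓab : ∀ᵐ ω ∂μ, Γ ω ∈ Set.Icc a b)
    (hf : Integrable f μ) (hf0 : ∫ ω, f ω ∂μ = 0) :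
    ∫ ω, Γ ω * f ω ∂μ ≤ (b - a) * ∫ ω, |f ω| ∂μ := by
  have hshift : Integrable (fun ω => (Γ ω - a) * f ω) μ := by
    refine hf.bdd_mul (c := b - a) (hΓ.sub aestronglyMeasurable_const) ?_
    filter_upwards [hΓab] with ω ⟨hle, hge⟩
    rw [Real.norm_eq_abs, abs_of_nonneg (by linarith)]
    linarith
  have hshift_eq : ∫ ω, Γ ω * f ω ∂μ = ∫ ω, (Γ ω - a) * f ω ∂μ := by
    calc ∫ ω, Γ ω * f ω ∂μ = ∫ ω, ((Γ ω - a) * f ω + a * f ω) ∂μ := by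
          congr 1 with ω; ring
      _ = ∫ ω, (Γ ω - a) * f ω ∂μ := by
          rw [integral_add hshift (hf.const_mul a), integral_const_mul, hf0, mul_zero, add_zero]
  have hpointwise : ∀ᵐ ω ∂μ, (Γ ω - a) * f ω ≤ (b - a) * |f ω| := by
    filter_upwards [hΓab] with ω ⟨hle, hge⟩
    calc (Γ ω - a) * f ω ≤ (Γ ω - a) * |f ω| :=
          mul_le_mul_of_nonneg_left (le_abs_self _) (by linarith)
      _ ≤ (b - a) * |f ω| := by gcongr
  rw [hshift_eq, ← integral_const_mul]
  exact integral_mono_ae hshift (hf.abs.const_mul _) hpointwise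

section InnerProduct

variable {E : Type*} [NormedAddCommGroup E] [InnerProductSpace ℝ E] {Y : Ω → E}

theorem integral_inner_const_eq_zero [CompleteSpace E] (hY : Integrable Y μ)
    (hY0 : ∫ ω, Y ω ∂μ = 0) (v : E) : ∫ ω, ⟪Y ω, v⟫ ∂μ = 0 := by
  simp_rw [real_inner_comm v]
  rw [integral_inner hY, hY0, inner_zero_right]

theorem integral_abs_inner_const_le (hY : Integrable Y μ) (v : E) :
    ∫ ω, |⟪Y ω, v⟫| ∂μ ≤ ‖v‖ * ∫ ω, ‖Y ω‖ ∂μ := by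
  rw [← integral_const_mul]
  refine integral_mono_of_nonneg (.of_forall fun _ => abs_nonneg _) (hY.norm.const_mul _)
    (.of_forall fun ω => ?_)
  dsimp only
  rw [mul_comm]
  exact abs_real_inner_le_norm _ _

end InnerProduct

end

theorem bounded_factor_mean_zero_bound_general {Ω : Type*} [MeasurableSpace Ω]
    (μ : Measure Ω)
    {d : ℕ} (v : EuclideanSpace ℝ (Fin d))
    (Γ : Ω → ℝ) (γmin γmax : ℝ) (hγ : γmin ≤ γmax)
    (hΓmem : ∀ ω, Γ ω ∈ Set.Icc γmin γmax) (hΓmeas : Measurable Γ)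
    (Y : Ω → EuclideanSpace ℝ (Fin d)) (hYint : Integrable Y μ)
    (hYmean : (∫ ω, Y ω ∂μ) = 0) :
    (∫ ω, Γ ω * ⟪Y ω, v⟫ ∂μ) ≤ (γmax - γmin) * ‖v‖ * ∫ ω, ‖Y ω‖ ∂μ := by
  calc ∫ ω, Γ ω * ⟪Y ω, v⟫ ∂μ ≤ (γmax - γmin) * ∫ ω, |⟪Y ω, v⟫| ∂μ :=
        integral_mul_le_of_integral_eq_zero hΓmeas.aestronglyMeasurable (.of_forall hΓmem)
          (hYint.inner_const v) (integral_inner_const_eq_zero hYint hYmean v)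
    _ ≤ (γmax - γmin) * (‖v‖ * ∫ ω, ‖Y ω‖ ∂μ) := by
        gcongr
        exact integral_abs_inner_const_le hYint v
    _ = (γmax - γmin) * ‖v‖ * ∫ ω, ‖Y ω‖ ∂μ := (mul_assoc _ _ _).symm

/-- If `Γ ∈ [γmin, γmax]` a.s.-everywhere and `Y` has mean zero, then
`E[Γ · Yᵀv] ≤ (γmax - γmin) ‖v‖ E[‖Y‖]`. -/
theorem bounded_factor_mean_zero_bound {Ω : Type*} [MeasurableSpace Ω]
    (μ : Measure Ω) [IsProbabilityMeasure μ]
    {d : ℕ} (v : EuclideanSpace ℝ (Fin d))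
    (Γ : Ω → ℝ) (γmin γmax : ℝ) (hγ0 : 0 ≤ γmin) (hγ : γmin ≤ γmax)
    (hΓmem : ∀ ω, Γ ω ∈ Set.Icc γmin γmax) (hΓmeas : Measurable Γ)
    (Y : Ω → EuclideanSpace ℝ (Fin d)) (hYint : Integrable Y μ)
    (hYmean : (∫ ω, Y ω ∂μ) = 0) :
    (∫ ω, Γ ω * ⟪Y ω, v⟫ ∂μ) ≤ (γmax - γmin) * ‖v‖ * ∫ ω, ‖Y ω‖ ∂μ :=
  bounded_factor_mean_zero_bound_general μ v Γ γmin γmax hγ hΓmem hΓmeas Y hYint hYmean
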